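/- arXiv:1503.00955 — 3 statements merged into one kernel-verified Lean document; each statement's English description precedes it below -/
import Mathlib

section
/- Beurling's functions H±(z) = (sin πz / π)^2 · { Σ_{m=-∞}^{∞} sgn(m)/(z-m)^2 + 2/z } ± (sin πz / (πz))^2 satisfy H^-(x) ≤ sgn(x) ≤ H^+(x) for all real x, where sgn(x) = 1 for x > 0, sgn(0) = 0, and sgn(x) = -1 for x < 0. -/
/-!
Write `F x = ∑ₘ 1/(x-m)²` and `A x = ∑_{n ≥ 0} 1/(x+n)²`. Splitting the sign series by the sign
of `m` gives `∑ₘ sgn(m)/(x-m)² = F x - 2 A x + 1/x²`, and the cosecant expansion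
`F x = π² / sin² (πx)` (the derivative of Mathlib's cotangent expansion on the upper half-plane,
carried to the real axis by continuity) turns `(sin πx / π)² F x` into `1`. Hence for `x > 0`
off the integers
`H⁺(x) - 1 = 2 (sin πx / π)² (1/x² + 1/x - A x)` and `H⁻(x) - 1 = 2 (sin πx / π)² (1/x - A x)`,
and both are controlled by the telescoping bounds `1/x ≤ A x ≤ 1/x² + 1/x`. Negative `x` follow
since `H⁺(x) + H⁻(-x) = 0`, and the integers by continuity of `H±`.
-/

open Real Filter Topology

lemma hasDerivAt_pi_mul_cot_pi_mul {z : ℂ} (hz : Complex.sin (π * z) ≠ 0) :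
    HasDerivAt (fun w : ℂ => π * Complex.cot (π * w)) (-(π ^ 2 / Complex.sin (π * z) ^ 2)) z := by
  have hcot : HasDerivAt (fun w : ℂ => Complex.cos w / Complex.sin w)
      (-(1 / Complex.sin (π * z) ^ 2)) (π * z) := by
    refine ((Complex.hasDerivAt_cos _).div (Complex.hasDerivAt_sin _) hz).congr_deriv ?_
    field_simp
    linear_combination -Complex.sin_sq_add_cos_sq (π * z)
  have h := (hcot.comp z ((hasDerivAt_id z).const_mul (π : ℂ))).const_mul (π : ℂ)
  simp only [Function.comp_def, Complex.cot_eq_cos_div_sin] at h ⊢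
  exact h.congr_deriv (by ring)

open UpperHalfPlane in
lemma tsum_one_div_add_int_sq_of_im_pos {z : ℂ} (hz : 0 < z.im) :
    ∑' n : ℤ, 1 / (z + n) ^ 2 = π ^ 2 / Complex.sin (π * z) ^ 2 := by
  have h := iteratedDerivWithin_cot_pi_mul_eq_mul_tsum_div_pow (k := 1) le_rfl hz
  rw [iteratedDerivWithin_one, derivWithin_of_isOpen isOpen_upperHalfPlaneSet hz,
    (hasDerivAt_pi_mul_cot_pi_mul
      (sin_pi_mul_ne_zero (UpperHalfPlane.coe_mem_integerComplement ⟨z, hz⟩))).deriv] at h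
  simpa using h.symm

lemma continuousAt_tsum_one_div_add_int_sq {z₀ : ℂ} (hz₀ : z₀ ∈ Complex.integerComplement) :
    ContinuousAt (fun z : ℂ => ∑' n : ℤ, 1 / (z + n) ^ 2) z₀ := by
  obtain ⟨r, hr, hball⟩ := Metric.isOpen_iff.1 Complex.isOpen_compl_range_intCast z₀ hz₀
  have hfar (n : ℤ) : r ≤ ‖z₀ + n‖ := by
    by_contra! h
    refine hball (?_ : ((-n : ℤ) : ℂ) ∈ Metric.ball z₀ r) ⟨-n, rfl⟩
    rwa [Metric.mem_ball, dist_eq_norm, ← norm_neg, Int.cast_neg, neg_sub, sub_neg_eq_add]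
  have hnear (n : ℤ) (z : ℂ) (hz : z ∈ Metric.closedBall z₀ (r / 2)) :
      ‖z₀ + n‖ / 2 ≤ ‖z + n‖ := by
    rw [Metric.mem_closedBall, dist_eq_norm] at hz
    have htri := norm_sub_norm_le (z₀ + n) (z + n)
    rw [show z₀ + n - (z + n) = -(z - z₀) by ring, norm_neg] at htri
    linarith [hfar n]
  have hpos (n : ℤ) : 0 < ‖z₀ + n‖ := hr.trans_le (hfar n)
  have hbound (n : ℤ) (z : ℂ) (hz : z ∈ Metric.closedBall z₀ (r / 2)) :
      ‖1 / (z + n) ^ 2‖ ≤ 4 * ‖1 / (z₀ + n) ^ 2‖ := by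
    have := hpos n
    calc ‖1 / (z + n) ^ 2‖ ≤ 1 / (‖z₀ + n‖ / 2) ^ 2 := by
          rw [norm_div, norm_one, norm_pow]; gcongr; exact hnear n z hz
      _ = 4 * ‖1 / (z₀ + n) ^ 2‖ := by rw [norm_div, norm_one, norm_pow]; ring
  have hsum : Summable fun n : ℤ => ‖1 / (z₀ + n) ^ 2‖ := by
    refine summable_norm_iff.2 ((EisensteinSeries.linear_right_summable z₀ 1 le_rfl).congr ?_)
    intro n
    simp [zpow_ofNat]
  refine (continuousOn_tsum (fun n => ?_) (hsum.mul_left 4) hbound).continuousAt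
    (Metric.closedBall_mem_nhds _ (half_pos hr))
  refine ContinuousOn.div continuousOn_const (by fun_prop) fun z hz => pow_ne_zero _ ?_
  exact norm_pos_iff.1 ((half_pos (hpos n)).trans_le (hnear n z hz))

theorem tsum_one_div_add_int_sq {z : ℂ} (hz : z ∈ Complex.integerComplement) :
    ∑' n : ℤ, 1 / (z + n) ^ 2 = π ^ 2 / Complex.sin (π * z) ^ 2 := by
  rcases le_or_gt 0 z.im with him | him
  · have hcl : z ∈ closure {w : ℂ | 0 < w.im} := by rwa [Complex.closure_setOfPred_lt_im]
    have hbot := mem_closure_iff_nhdsWithin_neBot.1 hcl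
    have hsin : Complex.sin (π * z) ≠ 0 := sin_pi_mul_ne_zero hz
    refine tendsto_nhds_unique (l := nhdsWithin z {w : ℂ | 0 < w.im})
      ((continuousAt_tsum_one_div_add_int_sq hz).tendsto.mono_left nhdsWithin_le_nhds) ?_
    have hg : ContinuousAt (fun w : ℂ => (π : ℂ) ^ 2 / Complex.sin (π * w) ^ 2) z := by
      fun_prop (disch := exact pow_ne_zero _ hsin)
    refine (hg.tendsto.mono_left nhdsWithin_le_nhds).congr' ?_
    filter_upwards [self_mem_nhdsWithin] with w hw using (tsum_one_div_add_int_sq_of_im_pos hw).symm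
  · have h := tsum_one_div_add_int_sq_of_im_pos (z := -z) (by simpa using him)
    rw [mul_neg, Complex.sin_neg, neg_sq, ← (Equiv.neg ℤ).tsum_eq] at h
    rw [← h]
    exact tsum_congr fun n => by simp only [Equiv.neg_apply, Int.cast_neg]; ring

lemma summable_one_div_nat_add_sq (a : ℝ) : Summable fun n : ℕ => 1 / (n + a) ^ 2 := by
  simpa [sq_abs] using (Real.summable_one_div_nat_add_rpow a 2).2 one_lt_two

lemma hasSum_sub_succ_of_antitone {f : ℕ → ℝ} (hf : Antitone f) {l : ℝ}
    (hl : Tendsto f atTop (𝓝 l)) : HasSum (fun n => f n - f (n + 1)) (f 0 - l) := by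
  refine (hasSum_iff_tendsto_nat_of_nonneg (fun n => sub_nonneg.2 (hf n.le_succ)) _).2 ?_
  simpa only [Finset.sum_range_sub'] using tendsto_const_nhds.sub hl

lemma hasSum_one_div_add_sub_one_div_add_succ {x : ℝ} (hx : 0 < x) :
    HasSum (fun n : ℕ => 1 / (x + n) - 1 / (x + (n + 1))) (1 / x) := by
  have hf : Antitone fun n : ℕ => 1 / (x + n) := fun m n hmn =>
    one_div_le_one_div_of_le (by positivity) (by gcongr)
  have hl : Tendsto (fun n : ℕ => 1 / (x + n)) atTop (𝓝 0) :=
    tendsto_const_nhds.div_atTop (tendsto_atTop_add_const_left _ x tendsto_natCast_atTop_atTop)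
  simpa using hasSum_sub_succ_of_antitone hf hl

lemma one_div_le_tsum_one_div_add_sq {x : ℝ} (hx : 0 < x) :
    1 / x ≤ ∑' n : ℕ, 1 / (x + n) ^ 2 := by
  have ht := hasSum_one_div_add_sub_one_div_add_succ hx
  rw [← ht.tsum_eq]
  refine Summable.tsum_le_tsum (fun n => ?_) ht.summable
    ((summable_one_div_nat_add_sq x).congr fun n => by rw [add_comm])
  have hy : 0 < x + n := by positivity
  rw [div_sub_div _ _ hy.ne' (by positivity), div_le_div_iff₀ (by positivity) (by positivity)]
  nlinarith

lemma tsum_one_div_add_sq_le {x : ℝ} (hx : 0 < x) :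
    ∑' n : ℕ, 1 / (x + n) ^ 2 ≤ 1 / x ^ 2 + 1 / x := by
  have ht := hasSum_one_div_add_sub_one_div_add_succ hx
  have hs : Summable fun n : ℕ => 1 / (x + n) ^ 2 :=
    (summable_one_div_nat_add_sq x).congr fun n => by rw [add_comm]
  rw [hs.tsum_eq_zero_add, ← ht.tsum_eq]
  simp only [Nat.cast_zero, add_zero, Nat.cast_add, Nat.cast_one]
  refine add_le_add_right (Summable.tsum_le_tsum (fun n => ?_)
    ((summable_nat_add_iff 1).2 hs |>.congr fun n => by push_cast; ring_nf) ht.summable) _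
  have hy : 0 < x + n := by positivity
  rw [div_sub_div _ _ hy.ne' (by positivity), div_le_div_iff₀ (by positivity) (by positivity)]
  nlinarith

lemma tsum_sign_div_sub_sq (x : ℝ) :
    ∑' m : ℤ, (Int.sign m : ℝ) / (x - m) ^ 2
      = ∑' m : ℤ, 1 / (x - m) ^ 2 - 2 * ∑' n : ℕ, 1 / (x + n) ^ 2 + 1 / x ^ 2 := by
  obtain ⟨P, hP⟩ : Summable fun n : ℕ => 1 / (x - (n + 1)) ^ 2 :=
    (summable_one_div_nat_add_sq (1 - x)).congr fun n => by congr 1; ring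
  obtain ⟨N, hN⟩ : Summable fun n : ℕ => 1 / (x + (n + 1)) ^ 2 :=
    (summable_one_div_nat_add_sq (x + 1)).congr fun n => by congr 1; ring
  have hT := HasSum.of_add_one_of_neg_add_one (f := fun m : ℤ => (Int.sign m : ℝ) / (x - m) ^ 2)
    (hP.congr_fun fun n => by simp [Int.sign_natCast_add_one])
    (hN.neg.congr_fun fun n => by
      rw [Int.sign_neg, Int.sign_natCast_add_one]; push_cast; ring)
  have hF := HasSum.of_add_one_of_neg_add_one (f := fun m : ℤ => 1 / (x - m) ^ 2)
    (hP.congr_fun fun n => by simp) (hN.congr_fun fun n => by push_cast; ring)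
  have hA := HasSum.zero_add (f := fun n : ℕ => 1 / (x + n) ^ 2)
    (hN.congr_fun fun n => by simp)
  rw [hT.tsum_eq, hF.tsum_eq, hA.tsum_eq]
  simp only [Int.sign_zero, Int.cast_zero, Nat.cast_zero, sub_zero, add_zero, zero_div]
  ring

theorem Real.tsum_one_div_sub_int_sq {x : ℝ} (hx : x ∉ Set.range ((↑) : ℤ → ℝ)) :
    ∑' m : ℤ, 1 / (x - m) ^ 2 = π ^ 2 / Real.sin (π * x) ^ 2 := by
  have hz : (x : ℂ) ∈ Complex.integerComplement := fun ⟨m, hm⟩ => hx ⟨m, by exact_mod_cast hm⟩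
  apply Complex.ofReal_injective
  push_cast [Complex.ofReal_tsum]
  rw [← tsum_one_div_add_int_sq hz, ← (Equiv.neg ℤ).tsum_eq]
  exact tsum_congr fun m => by simp [sub_eq_add_neg]

lemma sign_bounds_of_dense {f g : ℝ → ℝ} (hf : Continuous f) (hg : Continuous g) {t : Set ℝ}
    (ht : Dense t) (h : ∀ x ∈ t, f x ≤ Real.sign x ∧ Real.sign x ≤ g x) (x : ℝ) :
    f x ≤ Real.sign x ∧ Real.sign x ≤ g x := by
  have hcl {s : Set ℝ} (hs : IsOpen s) : closure s ⊆ closure (s ∩ t) :=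
    closure_minimal (ht.open_subset_closure_inter hs) isClosed_closure
  have hpos {y : ℝ} (hy : 0 ≤ y) : f y ≤ 1 ∧ 1 ≤ g y := by
    have hy' := hcl isOpen_Ioi (by rwa [closure_Ioi])
    have hsign {z : ℝ} (hz : z ∈ Set.Ioi 0 ∩ t) := Real.sign_of_pos hz.1 ▸ h z hz.2
    exact ⟨le_on_closure (fun z hz => (hsign hz).1) hf.continuousOn continuousOn_const hy',
      le_on_closure (fun z hz => (hsign hz).2) continuousOn_const hg.continuousOn hy'⟩
  have hneg {y : ℝ} (hy : y ≤ 0) : f y ≤ -1 ∧ -1 ≤ g y := by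
    have hy' := hcl isOpen_Iio (by rwa [closure_Iio])
    have hsign {z : ℝ} (hz : z ∈ Set.Iio 0 ∩ t) := Real.sign_of_neg hz.1 ▸ h z hz.2
    exact ⟨le_on_closure (fun z hz => (hsign hz).1) hf.continuousOn continuousOn_const hy',
      le_on_closure (fun z hz => (hsign hz).2) continuousOn_const hg.continuousOn hy'⟩
  rcases lt_trichotomy x 0 with hx | rfl | hx
  · rw [Real.sign_of_neg hx]; exact hneg hx.le
  · rw [Real.sign_zero]
    exact ⟨(hneg le_rfl).1.trans (by norm_num), (hpos le_rfl).2.trans' (by norm_num)⟩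
  · rw [Real.sign_of_pos hx]; exact hpos hx.le

namespace Beurling

/-- On the real axis off the integers, `H± = oddPart ± fejer`. -/
noncomputable def oddPart (x : ℝ) : ℝ :=
  (Real.sin (π * x) / π) ^ 2 * ((∑' m : ℤ, (Int.sign m : ℝ) / (x - m) ^ 2) + 2 / x)

noncomputable def fejer (x : ℝ) : ℝ := (Real.sin (π * x) / (π * x)) ^ 2

lemma ofReal_oddPart (x : ℝ) : (oddPart x : ℂ) = (Complex.sin (π * x) / π) ^ 2 *
    ((∑' m : ℤ, (Int.sign m : ℂ) / ((x : ℂ) - m) ^ 2) + 2 / x) := by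
  push_cast [oddPart, Complex.ofReal_tsum]
  rfl

lemma ofReal_fejer (x : ℝ) : (fejer x : ℂ) = (Complex.sin (π * x) / (π * x)) ^ 2 := by
  push_cast [fejer]
  rfl

lemma oddPart_neg (x : ℝ) : oddPart (-x) = -oddPart x := by
  have hT : ∑' m : ℤ, (Int.sign m : ℝ) / (-x - m) ^ 2
      = -∑' m : ℤ, (Int.sign m : ℝ) / (x - m) ^ 2 := by
    rw [← tsum_neg, ← (Equiv.neg ℤ).tsum_eq]
    refine tsum_congr fun m => ?_
    simp only [Equiv.neg_apply, Int.sign_neg, Int.cast_neg]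
    ring
  rw [oddPart, oddPart, hT, mul_neg, Real.sin_neg]
  ring

lemma fejer_neg (x : ℝ) : fejer (-x) = fejer x := by
  rw [fejer, fejer, mul_neg, Real.sin_neg, neg_div_neg_eq]

lemma oddPart_sub_fejer_le_one_le_oddPart_add_fejer {x : ℝ} (hx₀ : 0 < x)
    (hx : x ∉ Set.range ((↑) : ℤ → ℝ)) : oddPart x - fejer x ≤ 1 ∧ 1 ≤ oddPart x + fejer x := by
  set S := (Real.sin (π * x) / π) ^ 2
  have hS : 0 ≤ S := sq_nonneg _
  have hsin : Real.sin (π * x) ≠ 0 := fun h0 => by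
    obtain ⟨n, hn⟩ := Real.sin_eq_zero_iff.1 h0
    exact hx ⟨n, mul_right_cancel₀ Real.pi_ne_zero (by rw [hn, mul_comm])⟩
  have hSF : S * (π ^ 2 / Real.sin (π * x) ^ 2) = 1 := by
    simp only [S]; field_simp
  have hfejer : fejer x = S * (1 / x ^ 2) := by
    rw [fejer]; ring
  have hlow := mul_le_mul_of_nonneg_left (one_div_le_tsum_one_div_add_sq hx₀) hS
  have hup := mul_le_mul_of_nonneg_left (tsum_one_div_add_sq_le hx₀) hS
  rw [hfejer, oddPart, tsum_sign_div_sub_sq, Real.tsum_one_div_sub_int_sq hx]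
  constructor
  · linear_combination hSF + 2 * hlow
  · linear_combination -hSF + 2 * hup

lemma oddPart_sub_fejer_le_sign_le_oddPart_add_fejer {x : ℝ}
    (hx : x ∉ Set.range ((↑) : ℤ → ℝ)) :
    oddPart x - fejer x ≤ Real.sign x ∧ Real.sign x ≤ oddPart x + fejer x := by
  rcases lt_trichotomy x 0 with hneg | rfl | hpos
  · have hx' : -x ∉ Set.range ((↑) : ℤ → ℝ) := fun ⟨m, hm⟩ => hx ⟨-m, by push_cast; linarith⟩
    have h := oddPart_sub_fejer_le_one_le_oddPart_add_fejer (neg_pos.2 hneg) hx'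
    rw [oddPart_neg, fejer_neg] at h
    rw [Real.sign_of_neg hneg]
    constructor <;> linarith [h.1, h.2]
  · exact absurd ⟨0, Int.cast_zero⟩ hx
  · rw [Real.sign_of_pos hpos]
    exact oddPart_sub_fejer_le_one_le_oddPart_add_fejer hpos hx

end Beurling

/-- Beurling's functions
`H±(z) = (sin πz / π)^2 { Σ_{m∈ℤ} sgn(m)/(z-m)^2 + 2/z } ± (sin πz/(πz))^2`
(real entire functions, characterized by the displayed formula away from the integers)
satisfy `H⁻(x) ≤ sgn(x) ≤ H⁺(x)` for all real `x`. -/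
theorem beurling_majorant_minorant_sign
    (Hp Hm : ℂ → ℂ)
    (hHp_entire : Differentiable ℂ Hp) (hHm_entire : Differentiable ℂ Hm)
    (hHp : ∀ z : ℂ, (∀ m : ℤ, z ≠ (m : ℂ)) →
      Hp z = (Complex.sin (π * z) / π) ^ 2 *
          ((∑' m : ℤ, (Int.sign m : ℂ) / (z - (m : ℂ)) ^ 2) + 2 / z)
        + (Complex.sin (π * z) / (π * z)) ^ 2)
    (hHm : ∀ z : ℂ, (∀ m : ℤ, z ≠ (m : ℂ)) →
      Hm z = (Complex.sin (π * z) / π) ^ 2 *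
          ((∑' m : ℤ, (Int.sign m : ℂ) / (z - (m : ℂ)) ^ 2) + 2 / z)
        - (Complex.sin (π * z) / (π * z)) ^ 2) :
    ∀ x : ℝ, (Hm (x : ℂ)).re ≤ Real.sign x ∧ Real.sign x ≤ (Hp (x : ℂ)).re := by
  have hHp_cont := hHp_entire.continuous
  have hHm_cont := hHm_entire.continuous
  refine sign_bounds_of_dense (by fun_prop) (by fun_prop)
    ((Set.countable_range ((↑) : ℤ → ℝ)).dense_compl ℝ) fun x hx => ?_
  have hz : ∀ m : ℤ, (x : ℂ) ≠ m := fun m h => hx ⟨m, by exact_mod_cast h.symm⟩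
  rw [hHm _ hz, hHp _ hz, ← Beurling.ofReal_oddPart, ← Beurling.ofReal_fejer, ← Complex.ofReal_sub,
    ← Complex.ofReal_add, Complex.ofReal_re, Complex.ofReal_re]
  exact Beurling.oddPart_sub_fejer_le_sign_le_oddPart_add_fejer hx
end

section
/- Let t and Δ be positive real numbers and let R±(z) = (1/2)·{H±(Δ(t+z)) + H±(Δ(t-z))}. Then there is an absolute constant C such that |R±(z)| ≤ C·exp(2πΔ·|Im z|) for all complex z. -/
open Complex Real Filter MeasureTheory

/-! Off the integers, `|sin πw| ≤ e^{π|Im w|}` and, by antiperiodicity,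
`|sin πw| ≤ 2π|w - n| e^{π|Im w|}` for every integer `n`. Taking `n` nearest to `w`, the second
bound cancels the double pole of the series at `n`, while the other terms are at most `4/(m - n)²`;
hence `|H±(w)| ≤ C e^{2π|Im w|}` off the integers, and everywhere by continuity. Substituting
`w = Δ(t ± z)` gives the bound for `R±`. -/

namespace Complex

lemma norm_sin_le_exp_abs_im (z : ℂ) : ‖sin z‖ ≤ Real.exp |z.im| := by
  have h₁ : ‖exp (-z * I)‖ ≤ Real.exp |z.im| := by
    rw [norm_exp]; gcongr; simpa using le_abs_self z.im
  have h₂ : ‖exp (z * I)‖ ≤ Real.exp |z.im| := by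
    rw [norm_exp]; gcongr; simpa using neg_le_abs z.im
  rw [sin, norm_div, norm_mul, norm_I, mul_one, Complex.norm_two]
  linarith [norm_sub_le (exp (-z * I)) (exp (z * I))]

lemma norm_sin_le_two_mul_norm_mul_exp_abs_im (z : ℂ) :
    ‖sin z‖ ≤ 2 * ‖z‖ * Real.exp |z.im| := by
  have hexp : 1 ≤ Real.exp |z.im| := Real.one_le_exp (abs_nonneg _)
  rcases le_or_gt ‖z‖ 1 with hz | hz
  · have hcubic : ‖z - z ^ 3 / 6‖ ≤ ‖z‖ + ‖z‖ ^ 3 / 6 := by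
      refine (norm_sub_le _ _).trans ?_
      rw [norm_div, norm_pow]; norm_num
    have hsin := (norm_sub_norm_le _ _).trans (sin_bound hz)
    have h3 : ‖z‖ ^ 3 ≤ ‖z‖ := pow_le_of_le_one (norm_nonneg _) hz (by norm_num)
    have h5 : ‖z‖ ^ 5 ≤ ‖z‖ := pow_le_of_le_one (norm_nonneg _) hz (by norm_num)
    nlinarith [norm_nonneg z]
  · nlinarith [norm_sin_le_exp_abs_im z]

lemma norm_sin_pi_mul_le (w : ℂ) (n : ℤ) :
    ‖sin (π * w)‖ ≤ 2 * π * ‖w - n‖ * Real.exp (π * |w.im|) := by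
  have hshift : sin (π * w) = (n.negOnePow : ℤ) * sin (π * (w - n)) := by
    rw [← sin_antiperiodic.add_int_mul_eq]; ring_nf
  have him : |(π * (w - n)).im| = π * |w.im| := by
    simp [abs_mul, abs_of_pos pi_pos]
  calc ‖sin (π * w)‖ = ‖sin (π * (w - n))‖ := by
        rw [hshift, norm_mul, Int.cast_negOnePow]; simp
    _ ≤ 2 * ‖(π : ℂ) * (w - n)‖ * Real.exp (π * |w.im|) :=
        him ▸ norm_sin_le_two_mul_norm_mul_exp_abs_im _
    _ = 2 * π * ‖w - n‖ * Real.exp (π * |w.im|) := by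
        rw [norm_mul, norm_real, Real.norm_of_nonneg pi_pos.le]; ring

end Complex

lemma hasSum_four_div_int_sub_sq (n : ℤ) :
    HasSum (fun m : ℤ => 4 / ((m : ℝ) - n) ^ 2) (4 * ∑' j : ℤ, 1 / (j : ℝ) ^ 2) := by
  have h := ((summable_one_div_int_pow.mpr one_lt_two).hasSum.mul_left 4)
  refine ((Equiv.subRight n).hasSum_iff.mpr h).congr_fun fun m => ?_
  simp [div_eq_mul_inv]

lemma norm_div_sub_int_sq_le {c w : ℂ} (hc : ‖c‖ ≤ 1) {m n : ℤ} (hn : |w.re - n| ≤ 1 / 2)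
    (hmn : m ≠ n) : ‖c / (w - m) ^ 2‖ ≤ 4 / ((m : ℝ) - n) ^ 2 := by
  have hgap : (1 : ℝ) ≤ |(m : ℝ) - n| := by
    exact_mod_cast Int.one_le_abs (sub_ne_zero.mpr hmn)
  have hdist : |(m : ℝ) - n| / 2 ≤ ‖w - m‖ := by
    have hre : |w.re - m| ≤ ‖w - m‖ := by simpa using abs_re_le_norm (w - m)
    linarith [abs_sub_le (m : ℝ) w.re n, abs_sub_comm (m : ℝ) w.re]
  have hsq : ((m : ℝ) - n) ^ 2 / 4 ≤ ‖w - m‖ ^ 2 := by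
    rw [← sq_abs]; nlinarith
  have hpos : 0 < ((m : ℝ) - n) ^ 2 / 4 := by
    linarith [(one_le_sq_iff_one_le_abs _).mpr hgap]
  rw [norm_div, norm_pow]
  calc ‖c‖ / ‖w - m‖ ^ 2 ≤ 1 / (((m : ℝ) - n) ^ 2 / 4) :=
        div_le_div₀ zero_le_one hc hpos hsq
    _ = 4 / ((m : ℝ) - n) ^ 2 := one_div_div _ _

lemma norm_tsum_div_sub_int_sq_le {c : ℤ → ℂ} (hc : ∀ m, ‖c m‖ ≤ 1) (w : ℂ) {n : ℤ}
    (hn : |w.re - n| ≤ 1 / 2) :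
    ‖∑' m : ℤ, c m / (w - m) ^ 2‖ ≤ 4 * (∑' j : ℤ, 1 / (j : ℝ) ^ 2) + 1 / ‖w - n‖ ^ 2 := by
  refine tsum_of_norm_bounded ((hasSum_four_div_int_sub_sq n).add (hasSum_ite_eq n _))
    fun m => ?_
  rcases eq_or_ne m n with rfl | hmn
  · -- the first summand is `4 / 0 = 0` here
    simpa using div_le_div_of_nonneg_right (hc m) (sq_nonneg ‖w - m‖)
  · simpa [hmn] using norm_div_sub_int_sq_le (hc m) hn hmn

lemma norm_intCast_sign_le_one (m : ℤ) : ‖(m.sign : ℂ)‖ ≤ 1 := by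
  rcases m.sign_trichotomy with h | h | h <;> simp [h]

lemma norm_beurling_terms_le {c : ℤ → ℂ} (hc : ∀ m, ‖c m‖ ≤ 1) (w : ℂ) :
    ‖(Complex.sin (π * w) / π) ^ 2 * ((∑' m : ℤ, c m / (w - m) ^ 2) + 2 / w)‖
      + ‖(Complex.sin (π * w) / (π * w)) ^ 2‖
      ≤ (12 + 4 * ∑' j : ℤ, 1 / (j : ℝ) ^ 2) * Real.exp (2 * π * |w.im|) := by
  set K := ∑' j : ℤ, 1 / (j : ℝ) ^ 2
  set s := ‖Complex.sin (π * w)‖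
  set E := Real.exp (π * |w.im|)
  set n := round w.re
  have hK : 0 ≤ K := tsum_nonneg fun j => by positivity
  have hπ : 1 ≤ π := by linarith [pi_gt_three]
  have hs : s ≤ E := by
    simpa [abs_mul, abs_of_pos pi_pos] using norm_sin_le_exp_abs_im (π * w)
  have hs_near : s ≤ 2 * π * ‖w - n‖ * E := norm_sin_pi_mul_le w n
  have hs_zero : s ≤ 2 * π * ‖w‖ * E := by simpa using norm_sin_pi_mul_le w 0
  have hseries := norm_tsum_div_sub_int_sq_le hc w (abs_sub_round w.re)
  have hE2 : Real.exp (2 * π * |w.im|) = E ^ 2 := by rw [← Real.exp_nat_mul]; ring_nf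
  have hE : 0 < E := Real.exp_pos _
  have hp : s / π ≤ E := div_le_of_le_mul₀ pi_pos.le hE.le (by nlinarith)
  have hq_near : s / (π * ‖w - n‖) ≤ 2 * E :=
    div_le_of_le_mul₀ (by positivity) (by positivity) (by linarith)
  have hq_zero : s / (π * ‖w‖) ≤ 2 * E :=
    div_le_of_le_mul₀ (by positivity) (by positivity) (by linarith)
  have hnorm_sq : ‖(Complex.sin (π * w) / π) ^ 2‖ = (s / π) ^ 2 := by
    rw [norm_pow, norm_div, norm_real, Real.norm_of_nonneg pi_pos.le]
  calc _ ≤ (s / π) ^ 2 * (4 * K + 1 / ‖w - n‖ ^ 2 + 2 / ‖w‖) + (s / (π * ‖w‖)) ^ 2 := by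
        rw [norm_mul, hnorm_sq, norm_pow, norm_div, norm_mul, norm_real,
          Real.norm_of_nonneg pi_pos.le]
        gcongr
        refine (norm_add_le _ _).trans (add_le_add hseries ?_)
        rw [norm_div, Complex.norm_two]
    _ = 4 * K * (s / π) ^ 2 + (s / (π * ‖w - n‖)) ^ 2 + 2 * (s / π) * (s / (π * ‖w‖))
          + (s / (π * ‖w‖)) ^ 2 := by ring
    _ ≤ 4 * K * E ^ 2 + (2 * E) ^ 2 + 2 * E * (2 * E) + (2 * E) ^ 2 := by gcongr
    _ = (12 + 4 * K) * Real.exp (2 * π * |w.im|) := by rw [hE2]; ring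

lemma le_of_forall_ne_intCast {f g : ℂ → ℝ} (hf : Continuous f) (hg : Continuous g)
    (h : ∀ w : ℂ, (∀ m : ℤ, w ≠ m) → f w ≤ g w) (w : ℂ) : f w ≤ g w := by
  have hdense : Dense (Set.range ((↑) : ℤ → ℂ))ᶜ := (Set.countable_range _).dense_compl ℂ
  exact le_on_closure (fun u (hu : u ∉ Set.range _) => h u fun m hm => hu ⟨m, hm.symm⟩)
    hf.continuousOn hg.continuousOn (hdense w)

lemma norm_average_reflect_le {H : ℂ → ℂ} {C a : ℝ}
    (hH : ∀ w, ‖H w‖ ≤ C * Real.exp (a * |w.im|)) (t : ℝ) {Δ : ℝ} (hΔ : 0 ≤ Δ) (z : ℂ) :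
    ‖(H ((Δ : ℂ) * ((t : ℂ) + z)) + H ((Δ : ℂ) * ((t : ℂ) - z))) / 2‖
      ≤ C * Real.exp (a * Δ * |z.im|) := by
  have him : ∀ u : ℂ, |u.im| = |z.im| → ‖H (Δ * u)‖ ≤ C * Real.exp (a * Δ * |z.im|) := by
    intro u hu
    simpa [abs_mul, abs_of_nonneg hΔ, hu, mul_assoc] using hH (Δ * u)
  rw [norm_div, Complex.norm_two]
  linarith [norm_add_le (H (Δ * (t + z))) (H (Δ * (t - z))), him (t + z) (by simp),
    him (t - z) (by simp)]

/-- |R±(z)| ≤ C e^{2πΔ|Im z|} for all complex z, with an absolute constant C. -/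
theorem selberg_exponential_growth
    (Hp Hm : ℂ → ℂ)
    (hHp_entire : Differentiable ℂ Hp) (hHm_entire : Differentiable ℂ Hm)
    (hHp : ∀ z : ℂ, (∀ m : ℤ, z ≠ (m : ℂ)) →
      Hp z = (Complex.sin (π * z) / π) ^ 2 *
          ((∑' m : ℤ, (Int.sign m : ℂ) / (z - (m : ℂ)) ^ 2) + 2 / z)
        + (Complex.sin (π * z) / (π * z)) ^ 2)
    (hHm : ∀ z : ℂ, (∀ m : ℤ, z ≠ (m : ℂ)) →
      Hm z = (Complex.sin (π * z) / π) ^ 2 *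
          ((∑' m : ℤ, (Int.sign m : ℂ) / (z - (m : ℂ)) ^ 2) + 2 / z)
        - (Complex.sin (π * z) / (π * z)) ^ 2) :
    ∃ C : ℝ, ∀ t Δ : ℝ, 0 < t → 0 < Δ → ∀ z : ℂ,
      ‖(Hp ((Δ : ℂ) * ((t : ℂ) + z)) + Hp ((Δ : ℂ) * ((t : ℂ) - z))) / 2‖
          ≤ C * Real.exp (2 * π * Δ * |z.im|) ∧
        ‖(Hm ((Δ : ℂ) * ((t : ℂ) + z)) + Hm ((Δ : ℂ) * ((t : ℂ) - z))) / 2‖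
          ≤ C * Real.exp (2 * π * Δ * |z.im|) := by
  set C := 12 + 4 * ∑' j : ℤ, 1 / (j : ℝ) ^ 2
  have hcont : Continuous fun w : ℂ => C * Real.exp (2 * π * |w.im|) := by fun_prop
  have hHp_le : ∀ w, ‖Hp w‖ ≤ C * Real.exp (2 * π * |w.im|) :=
    le_of_forall_ne_intCast hHp_entire.continuous.norm hcont fun w hw => by
      rw [hHp w hw]
      exact (norm_add_le _ _).trans (norm_beurling_terms_le norm_intCast_sign_le_one w)
  have hHm_le : ∀ w, ‖Hm w‖ ≤ C * Real.exp (2 * π * |w.im|) :=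
    le_of_forall_ne_intCast hHm_entire.continuous.norm hcont fun w hw => by
      rw [hHm w hw]
      exact (norm_sub_le _ _).trans (norm_beurling_terms_le norm_intCast_sign_le_one w)
  exact ⟨C, fun t Δ _ hΔ z =>
    ⟨norm_average_reflect_le hHp_le t hΔ.le z, norm_average_reflect_le hHm_le t hΔ.le z⟩⟩
end

section
/- Let t and Δ be positive real numbers and let R±(z) = (1/2)·{H±(Δ(t+z)) + H±(Δ(t-z))}. Then there is an absolute constant C such that |R±(x)| ≤ C·min(1, Δ^{-2}·(|x| - t)^{-2}) for all real x with |x| > t. -/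
/-!
Off the integers, Parseval's identity for `t ↦ exp (2πixt)` on `(0, 1]` gives
`∑ₙ (x - n)⁻² = π² / sin² (πx)`, so for real `x > 0` the defining series collapses to
`H±(x) = 1 + sinc² (πx) · (2x - 1 - 2x² ∑_{k ≥ 1} (x + k)⁻² ± 1)`.
Comparing the tail with the telescoping sums `∑ ((y + k)(y + k + 1))⁻¹ = y⁻¹` at `y = x, x + 1`
bounds the middle bracket by `1`, whence `|H±(x) - 1| ≤ 2 sinc² (πx) ≤ 2 min(1, x⁻²)`, first off
the integers and then, by continuity, for all `x > 0`. The series is odd up to the sign `±`, so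
`H±(-z) = -H∓(z)`; for `|x| > t` this turns `2R±(x)` into `(H±(a) - 1) - (H∓(b) - 1)` with
`a = Δ(|x| + t) ≥ b = Δ(|x| - t) > 0`, and both brackets are at most `2 min(1, b⁻²)`.
-/

open Complex Real Filter MeasureTheory
open Set Topology

lemma sin_pi_mul_ne_zero_of_ne_intCast {x : ℝ} (hx : ∀ m : ℤ, x ≠ m) : Real.sin (π * x) ≠ 0 :=
  Real.sin_ne_zero_iff.mpr fun n hn =>
    hx n (mul_left_cancel₀ Real.pi_ne_zero (by rw [← hn, mul_comm])).symm

lemma fourierCoeffOn_exp_mul {x : ℝ} (n : ℤ) (hxn : x ≠ n) :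
    fourierCoeffOn zero_lt_one (fun t : ℝ => Complex.exp (2 * π * I * x * t)) n =
      (Complex.exp (2 * π * I * (x - n)) - 1) / (2 * π * I * (x - n)) := by
  have hc : (2 * π * I * (x - n) : ℂ) ≠ 0 := by
    have : (x : ℂ) - n ≠ 0 := sub_ne_zero.mpr (by exact_mod_cast hxn)
    simp [Real.pi_ne_zero, I_ne_zero, this]
  rw [fourierCoeffOn_eq_integral]
  have hint : ∀ t ∈ uIcc (0 : ℝ) 1, (fourier (-n) (t : AddCircle (1 - (0 : ℝ))) : ℂ) •
      Complex.exp (2 * π * I * x * t) = Complex.exp (2 * π * I * (x - n) * t) := by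
    intro t _
    rw [fourier_coe_apply, smul_eq_mul, ← Complex.exp_add]
    congr 1
    push_cast
    field_simp
    ring
  rw [intervalIntegral.integral_congr hint, integral_exp_mul_complex hc]
  norm_num

lemma norm_fourierCoeffOn_exp_mul_sq {x : ℝ} (n : ℤ) (hxn : x ≠ n) :
    ‖fourierCoeffOn zero_lt_one (fun t : ℝ => Complex.exp (2 * π * I * x * t)) n‖ ^ 2 =
      Real.sin (π * x) ^ 2 / π ^ 2 * ((x - n) ^ 2)⁻¹ := by
  rw [fourierCoeffOn_exp_mul n hxn, norm_div]
  have hθ : 2 * π * I * (x - n) = I * ((2 * π * (x - n) : ℝ) : ℂ) := by push_cast; ring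
  have hsign : ((-1 : ℝ) ^ n) ^ 2 = 1 := by rw [← sq_abs, abs_neg_one_zpow, one_pow]
  have hxn' : x - n ≠ 0 := sub_ne_zero.mpr hxn
  rw [hθ, norm_exp_I_mul_ofReal_sub_one, norm_mul I, norm_I, one_mul, Complex.norm_real,
    show 2 * π * (x - n) / 2 = π * x - n * π by ring, Real.sin_sub_int_mul_pi]
  simp only [Real.norm_eq_abs, div_pow, sq_abs, mul_pow, hsign, one_mul]
  field_simp

lemma tsum_inv_sub_intCast_sq {x : ℝ} (hx : ∀ m : ℤ, x ≠ m) :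
    ∑' n : ℤ, ((x - n) ^ 2)⁻¹ = π ^ 2 / Real.sin (π * x) ^ 2 := by
  have hf_norm : ∀ t : ℝ, ‖Complex.exp (2 * π * I * x * t)‖ = 1 := fun t => by
    rw [show 2 * π * I * x * t = ((2 * π * x * t : ℝ) : ℂ) * I by push_cast; ring]
    exact norm_exp_ofReal_mul_I _
  have hf_L2 : MemLp (fun t : ℝ => Complex.exp (2 * π * I * x * t)) 2
      (volume.restrict (Ioc 0 1)) :=
    MemLp.of_bound (by fun_prop) 1 (ae_of_all _ fun t => (hf_norm t).le)
  have hparseval := tsum_sq_fourierCoeffOn zero_lt_one hf_L2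
  simp only [hf_norm, norm_fourierCoeffOn_exp_mul_sq _ (hx _), tsum_mul_left] at hparseval
  have hsin := sin_pi_mul_ne_zero_of_ne_intCast hx
  norm_num at hparseval
  field_simp at hparseval
  rw [eq_div_iff (pow_ne_zero 2 hsin), mul_comm]
  simpa only [one_div] using hparseval

lemma summable_inv_sub_intCast_sq (x : ℝ) : Summable fun n : ℤ => ((x - n) ^ 2)⁻¹ :=
  ((Real.summable_one_div_int_add_rpow (-x) 2).mpr one_lt_two).congr fun n => by
    rw [Real.rpow_two, sq_abs, one_div, ← neg_sub, neg_sq, ← sub_eq_add_neg]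

lemma tsum_intSign_div_sub_sq (x : ℝ) :
    ∑' n : ℤ, (n.sign : ℝ) / (x - n) ^ 2 =
      ∑' n : ℤ, ((x - n) ^ 2)⁻¹ - (x ^ 2)⁻¹ - 2 * ∑' k : ℕ, ((x + (k + 1)) ^ 2)⁻¹ := by
  set f : ℤ → ℝ := fun n => ((x - n) ^ 2)⁻¹
  have hf := summable_inv_sub_intCast_sq x
  have hpos : Summable fun k : ℕ => f (k + 1) :=
    hf.comp_injective fun a b h => by simpa using h
  have hneg : Summable fun k : ℕ => f (-(k + 1)) :=
    hf.comp_injective fun a b h => by simpa using h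
  have hneg_eq : ∀ k : ℕ, f (-(k + 1)) = ((x + (k + 1)) ^ 2)⁻¹ := fun k => by
    simp only [f]; push_cast; ring_nf
  have hsign_pos : ∀ k : ℕ, (((k : ℤ) + 1).sign : ℝ) / (x - ((k + 1 : ℤ) : ℝ)) ^ 2 = f (k + 1) :=
    fun k => by rw [Int.sign_eq_one_of_pos (by omega)]; simp [f, div_eq_mul_inv]
  have hsign_neg : ∀ k : ℕ,
      ((-((k : ℤ) + 1)).sign : ℝ) / (x - ((-(k + 1) : ℤ) : ℝ)) ^ 2 = -f (-(k + 1)) :=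
    fun k => by rw [Int.sign_eq_neg_one_of_neg (by omega)]; simp [f, div_eq_mul_inv]
  rw [tsum_of_add_one_of_neg_add_one (f := f) hpos hneg,
    tsum_of_add_one_of_neg_add_one (f := fun n : ℤ => (n.sign : ℝ) / (x - n) ^ 2)
      (hpos.congr fun k => (hsign_pos k).symm) (hneg.neg.congr fun k => (hsign_neg k).symm)]
  simp only [hsign_pos, hsign_neg, tsum_neg, hneg_eq, f]
  simp only [Int.cast_add, Int.cast_natCast, Int.cast_one, Int.sign_zero, Int.cast_zero, sub_zero,
    zero_div, add_zero]
  ring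

lemma Antitone.hasSum_sub_succ {f : ℕ → ℝ} {l : ℝ} (hf : Antitone f)
    (hl : Tendsto f atTop (𝓝 l)) : HasSum (fun n => f n - f (n + 1)) (f 0 - l) := by
  rw [hasSum_iff_tendsto_nat_of_nonneg fun n => sub_nonneg.mpr (hf n.le_succ)]
  simp_rw [Finset.sum_range_sub']
  exact tendsto_const_nhds.sub hl

lemma hasSum_inv_add_mul_inv_add_succ {x : ℝ} (hx : 0 < x) :
    HasSum (fun k : ℕ => ((x + k) * (x + (k + 1)))⁻¹) x⁻¹ := by
  have hanti : Antitone fun k : ℕ => (x + k)⁻¹ := fun a b hab =>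
    inv_anti₀ (by positivity) (by gcongr)
  have hlim : Tendsto (fun k : ℕ => (x + k)⁻¹) atTop (𝓝 0) :=
    tendsto_inv_atTop_zero.comp (tendsto_atTop_add_const_left _ _ tendsto_natCast_atTop_atTop)
  convert hanti.hasSum_sub_succ hlim using 1
  · ext k
    have : 0 < x + k := by positivity
    push_cast
    field_simp
    ring
  · simp

lemma tsum_inv_add_succ_sq_mem_Icc {x : ℝ} (hx : 0 < x) :
    ∑' k : ℕ, ((x + (k + 1)) ^ 2)⁻¹ ∈ Icc (x + 1)⁻¹ x⁻¹ := by
  have hupper := hasSum_inv_add_mul_inv_add_succ hx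
  have hlower := hasSum_inv_add_mul_inv_add_succ (x := x + 1) (by positivity)
  have hterm_le : ∀ k : ℕ, ((x + (k + 1)) ^ 2)⁻¹ ≤ ((x + k) * (x + (k + 1)))⁻¹ := fun k =>
    inv_anti₀ (by positivity) (by rw [sq]; gcongr; linarith)
  have hsum : Summable fun k : ℕ => ((x + (k + 1)) ^ 2)⁻¹ :=
    hupper.summable.of_nonneg_of_le (fun k => by positivity) hterm_le
  refine ⟨hasSum_le (fun k => ?_) hlower hsum.hasSum, hasSum_le hterm_le hsum.hasSum hupper⟩
  exact inv_anti₀ (by positivity) (by nlinarith)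

lemma abs_real_beurlingFormula_sub_one_le {x ε : ℝ} (hx0 : 0 < x) (hx : ∀ m : ℤ, x ≠ m)
    (hε : |ε| ≤ 1) :
    |(Real.sin (π * x) / π) ^ 2 * (∑' n : ℤ, (n.sign : ℝ) / (x - n) ^ 2 + 2 / x) +
      ε * (Real.sin (π * x) / (π * x)) ^ 2 - 1| ≤ 2 * sinc (π * x) ^ 2 := by
  have hsin := sin_pi_mul_ne_zero_of_ne_intCast hx
  rw [tsum_intSign_div_sub_sq, tsum_inv_sub_intCast_sq hx, sinc_of_ne_zero (by positivity)]
  obtain ⟨hN_ge, hN_le⟩ := tsum_inv_add_succ_sq_mem_Icc hx0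
  set N := ∑' k : ℕ, ((x + (k + 1)) ^ 2)⁻¹
  set s := Real.sin (π * x)
  have htail : |2 * x - 1 - 2 * x ^ 2 * N| ≤ 1 := by
    have hupper : x ^ 2 * N ≤ x := calc
      x ^ 2 * N ≤ x ^ 2 * x⁻¹ := by gcongr
      _ = x := by field_simp
    have hlower : x - 1 ≤ x ^ 2 * N := calc
      x - 1 ≤ x ^ 2 * (x + 1)⁻¹ := by rw [← div_eq_mul_inv, le_div_iff₀ (by positivity)]; nlinarith
      _ ≤ x ^ 2 * N := by gcongr
    rw [abs_le]
    constructor <;> linarith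
  have hkey : (s / π) ^ 2 * (π ^ 2 / s ^ 2 - (x ^ 2)⁻¹ - 2 * N + 2 / x) + ε * (s / (π * x)) ^ 2 - 1
      = (s / (π * x)) ^ 2 * ((2 * x - 1 - 2 * x ^ 2 * N) + ε) := by
    field_simp
    ring
  rw [hkey, abs_mul, abs_sq]
  calc (s / (π * x)) ^ 2 * |2 * x - 1 - 2 * x ^ 2 * N + ε| ≤ (s / (π * x)) ^ 2 * (1 + 1) := by
        gcongr; exact (abs_add_le _ _).trans (add_le_add htail hε)
    _ = 2 * (s / (π * x)) ^ 2 := by ring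

/-- `ε = 1` and `ε = -1` give the series defining `H+` and `H-` off the integers. -/
noncomputable def beurlingFormula (ε z : ℂ) : ℂ :=
  (Complex.sin (π * z) / π) ^ 2 * ((∑' m : ℤ, (Int.sign m : ℂ) / (z - m) ^ 2) + 2 / z) +
    ε * (Complex.sin (π * z) / (π * z)) ^ 2

lemma beurlingFormula_neg (ε z : ℂ) : beurlingFormula ε (-z) = -beurlingFormula (-ε) z := by
  have hodd : ∑' m : ℤ, (Int.sign m : ℂ) / (-z - m) ^ 2 =
      -∑' m : ℤ, (Int.sign m : ℂ) / (z - m) ^ 2 := by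
    rw [← (Equiv.neg ℤ).tsum_eq, ← tsum_neg]
    refine tsum_congr fun m => ?_
    simp only [Equiv.neg_apply, Int.sign_neg, Int.cast_neg]
    ring
  simp only [beurlingFormula, hodd, mul_neg, Complex.sin_neg]
  ring

lemma beurlingFormula_ofReal (ε x : ℝ) :
    beurlingFormula ε x = (((Real.sin (π * x) / π) ^ 2 *
      (∑' n : ℤ, (n.sign : ℝ) / (x - n) ^ 2 + 2 / x) +
        ε * (Real.sin (π * x) / (π * x)) ^ 2 : ℝ) : ℂ) := by
  simp only [beurlingFormula]
  push_cast [Complex.ofReal_tsum]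
  rfl

lemma norm_beurlingFormula_sub_one_le {x ε : ℝ} (hx0 : 0 < x) (hx : ∀ m : ℤ, x ≠ m)
    (hε : |ε| ≤ 1) : ‖beurlingFormula ε x - 1‖ ≤ 2 * sinc (π * x) ^ 2 := by
  rw [beurlingFormula_ofReal, ← Complex.ofReal_one, ← Complex.ofReal_sub, Complex.norm_real,
    Real.norm_eq_abs]
  exact abs_real_beurlingFormula_sub_one_le hx0 hx hε

lemma sinc_pi_mul_sq_le {x : ℝ} (hx : x ≠ 0) : sinc (π * x) ^ 2 ≤ min 1 (x ^ 2)⁻¹ := by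
  refine le_min ?_ ?_
  · exact (sq_le_one_iff_abs_le_one _).mpr (abs_sinc_le_one _)
  · rw [sinc_of_ne_zero (by positivity), div_pow, mul_pow]
    have hπ : 1 ≤ π ^ 2 := one_le_pow₀ (by linarith [Real.pi_gt_three])
    rw [div_le_iff₀ (by positivity), inv_mul_eq_div, mul_div_assoc, div_self (by positivity),
      mul_one]
    nlinarith [Real.sin_sq_le_one (π * x)]

lemma dense_integerComplement : Dense Complex.integerComplement :=
  (countable_range _).dense_compl ℝ

lemma eq_neg_of_eq_beurlingFormula {H H' : ℂ → ℂ} {ε : ℂ} (hH : Continuous H)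
    (hH' : Continuous H')
    (hH_eq : ∀ z : ℂ, (∀ m : ℤ, z ≠ m) → H z = beurlingFormula ε z)
    (hH'_eq : ∀ z : ℂ, (∀ m : ℤ, z ≠ m) → H' z = beurlingFormula (-ε) z) (z : ℂ) :
    H (-z) = -H' z := by
  refine congrFun (Continuous.ext_on dense_integerComplement (hH.comp continuous_neg) hH'.neg
    fun w hw => ?_) z
  have hw' : ∀ m : ℤ, w ≠ m := fun m hm => hw ⟨m, hm.symm⟩
  have hnw : ∀ m : ℤ, -w ≠ m := fun m hm => hw' (-m) (by push_cast; rw [← hm, neg_neg])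
  simp only [Function.comp_apply, Pi.neg_apply, hH_eq _ hnw, hH'_eq _ hw', beurlingFormula_neg]

lemma norm_sub_one_le_of_eq_beurlingFormula {H : ℂ → ℂ} {ε : ℝ} (hH : Continuous H)
    (hε : |ε| ≤ 1) (hH_eq : ∀ z : ℂ, (∀ m : ℤ, z ≠ m) → H z = beurlingFormula ε z)
    {x : ℝ} (hx : 0 < x) : ‖H x - 1‖ ≤ 2 * min 1 (x ^ 2)⁻¹ := by
  have hclosed : IsClosed {y : ℝ | ‖H y - 1‖ ≤ 2 * sinc (π * y) ^ 2} :=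
    isClosed_le (by fun_prop) (by fun_prop)
  have hdense : Dense (range ((↑) : ℤ → ℝ))ᶜ := (countable_range _).dense_compl ℝ
  have hsub : Ioi 0 ∩ (range ((↑) : ℤ → ℝ))ᶜ ⊆ {y : ℝ | ‖H y - 1‖ ≤ 2 * sinc (π * y) ^ 2} := by
    rintro y ⟨hy0, hy⟩
    have hy' : ∀ m : ℤ, y ≠ m := fun m hm => hy ⟨m, hm.symm⟩
    rw [mem_ofPred_eq, hH_eq _ fun m hm => hy' m (by exact_mod_cast hm)]
    exact norm_beurlingFormula_sub_one_le hy0 hy' hε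
  calc ‖H x - 1‖ ≤ 2 * sinc (π * x) ^ 2 :=
        hclosed.closure_subset_iff.mpr hsub (hdense.open_subset_closure_inter isOpen_Ioi hx)
    _ ≤ 2 * min 1 (x ^ 2)⁻¹ := by gcongr; exact sinc_pi_mul_sq_le hx.ne'

lemma norm_add_neg_div_two_le {H H' : ℂ → ℂ} (hodd : ∀ z, H (-z) = -H' z)
    (hH : ∀ y : ℝ, 0 < y → ‖H y - 1‖ ≤ 2 * min 1 (y ^ 2)⁻¹)
    (hH' : ∀ y : ℝ, 0 < y → ‖H' y - 1‖ ≤ 2 * min 1 (y ^ 2)⁻¹) {a b : ℝ} (hb : 0 < b)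
    (hba : b ≤ a) : ‖(H a + H (-b)) / 2‖ ≤ 2 * min 1 (b ^ 2)⁻¹ := by
  have hmin : min 1 (a ^ 2)⁻¹ ≤ min 1 (b ^ 2)⁻¹ := by gcongr
  rw [hodd, show H a + -H' b = (H a - 1) - (H' b - 1) by ring, norm_div, Complex.norm_two]
  linarith [norm_sub_le (H a - 1) (H' b - 1), hH a (hb.trans_le hba), hH' b hb]

/-- |R±(x)| ≤ C·min(1, Δ^{-2}(|x|-t)^{-2}) for real x with |x| > t, with an
absolute constant C. -/
theorem selberg_decay_on_reals
    (Hp Hm : ℂ → ℂ)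
    (hHp_entire : Differentiable ℂ Hp) (hHm_entire : Differentiable ℂ Hm)
    (hHp : ∀ z : ℂ, (∀ m : ℤ, z ≠ (m : ℂ)) →
      Hp z = (Complex.sin (π * z) / π) ^ 2 *
          ((∑' m : ℤ, (Int.sign m : ℂ) / (z - (m : ℂ)) ^ 2) + 2 / z)
        + (Complex.sin (π * z) / (π * z)) ^ 2)
    (hHm : ∀ z : ℂ, (∀ m : ℤ, z ≠ (m : ℂ)) →
      Hm z = (Complex.sin (π * z) / π) ^ 2 *
          ((∑' m : ℤ, (Int.sign m : ℂ) / (z - (m : ℂ)) ^ 2) + 2 / z)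
        - (Complex.sin (π * z) / (π * z)) ^ 2) :
    ∃ C : ℝ, ∀ t Δ : ℝ, 0 < t → 0 < Δ → ∀ x : ℝ, t < |x| →
      ‖(Hp ((Δ * (t + x) : ℝ) : ℂ) + Hp ((Δ * (t - x) : ℝ) : ℂ)) / 2‖
          ≤ C * min 1 ((Δ ^ (2 : ℕ) * (|x| - t) ^ (2 : ℕ))⁻¹) ∧
        ‖(Hm ((Δ * (t + x) : ℝ) : ℂ) + Hm ((Δ * (t - x) : ℝ) : ℂ)) / 2‖
          ≤ C * min 1 ((Δ ^ (2 : ℕ) * (|x| - t) ^ (2 : ℕ))⁻¹) := by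
  have hp_eq : ∀ z : ℂ, (∀ m : ℤ, z ≠ m) → Hp z = beurlingFormula ((1 : ℝ) : ℂ) z := fun z hz => by
    rw [hHp z hz, beurlingFormula, Complex.ofReal_one, one_mul]
  have hm_eq : ∀ z : ℂ, (∀ m : ℤ, z ≠ m) → Hm z = beurlingFormula ((-1 : ℝ) : ℂ) z := fun z hz => by
    rw [hHm z hz, beurlingFormula]; push_cast; ring
  have hp_odd := eq_neg_of_eq_beurlingFormula hHp_entire.continuous hHm_entire.continuous hp_eq
    (by simpa using hm_eq)
  have hm_odd := eq_neg_of_eq_beurlingFormula hHm_entire.continuous hHp_entire.continuous hm_eq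
    (by simpa using hp_eq)
  have hp_bound := fun y (hy : 0 < y) =>
    norm_sub_one_le_of_eq_beurlingFormula hHp_entire.continuous (by norm_num) hp_eq hy
  have hm_bound := fun y (hy : 0 < y) =>
    norm_sub_one_le_of_eq_beurlingFormula hHm_entire.continuous (by norm_num) hm_eq hy
  refine ⟨2, fun t Δ ht hΔ x hx => ?_⟩
  have hb : 0 < Δ * (|x| - t) := mul_pos hΔ (by linarith)
  have hba : Δ * (|x| - t) ≤ Δ * (|x| + t) := by gcongr; linarith
  have hpair : ∀ H : ℂ → ℂ, H ((Δ * (t + x) : ℝ) : ℂ) + H ((Δ * (t - x) : ℝ) : ℂ) =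
      H ((Δ * (|x| + t) : ℝ) : ℂ) + H (-((Δ * (|x| - t) : ℝ) : ℂ)) := fun H => by
    rcases lt_abs.mp hx with hxt | hxt
    · rw [abs_of_pos (by linarith)]
      congr 2 <;> push_cast <;> ring
    · rw [abs_of_neg (by linarith), add_comm (H _)]
      congr 2 <;> push_cast <;> ring
  rw [hpair, hpair, ← mul_pow]
  exact ⟨norm_add_neg_div_two_le hp_odd hp_bound hm_bound hb hba,
    norm_add_neg_div_two_le hm_odd hm_bound hp_bound hb hba⟩
end
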